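/- arXiv:2209.08813 — 2 statements merged into one kernel-verified Lean document; each statement's English description precedes it below -/
import Mathlib

section
/- For all integers 2 ≤ i ≤ j ≤ n, the group homomorphism J_n^{i,j} → J_n defined on generators by s_{p,q} ↦ s_{p,q} is injective. -/
/-- The set of intervals `[p,q]`, `1 ≤ p < q ≤ n`, indexing the generators `s_{p,q}`
of the cactus group `J_n`. -/
def cactusSet (n : ℕ) : Set (ℕ × ℕ) := {pq | 1 ≤ pq.1 ∧ pq.1 < pq.2 ∧ pq.2 ≤ n}

/-- The defining relations (j1)-(j3) of the cactus group, restricted to a collection `C`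
of generating intervals: exactly those cactus relations involving only generators from `C`. -/
def cactusRels (C : Set (ℕ × ℕ)) : Set (FreeGroup C) :=
  {w | (∃ a : C, w = FreeGroup.of a * FreeGroup.of a) ∨
    (∃ a b : C, (a.1.2 < b.1.1 ∨ b.1.2 < a.1.1) ∧
      w = FreeGroup.of a * FreeGroup.of b * (FreeGroup.of a)⁻¹ * (FreeGroup.of b)⁻¹) ∨
    (∃ a b c : C, a.1.1 ≤ b.1.1 ∧ b.1.2 ≤ a.1.2 ∧
      c.1.1 = a.1.1 + a.1.2 - b.1.2 ∧ c.1.2 = a.1.1 + a.1.2 - b.1.1 ∧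
      w = FreeGroup.of a * FreeGroup.of b * (FreeGroup.of a)⁻¹ * (FreeGroup.of c)⁻¹)}

/-- The group presented by the generators `s_I`, `I ∈ C`, and those cactus relations
involving only these generators. -/
abbrev PartialCactusGroup (C : Set (ℕ × ℕ)) := PresentedGroup (cactusRels C)

/-- The cactus group `J_n`. -/
abbrev CactusGroup (n : ℕ) := PartialCactusGroup (cactusSet n)

/-- The generating intervals of `J_n^{i,j}`: those `[p,q]` whose leaf number `q-p+1`
lies between `i` and `j`. -/
def sliceSet (n i j : ℕ) : Set (ℕ × ℕ) :=
  {pq | pq ∈ cactusSet n ∧ i ≤ pq.2 - pq.1 + 1 ∧ pq.2 - pq.1 + 1 ≤ j}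

/-- The group `J_n^{i,j}`, presented by the generators `s_{p,q}` with `i ≤ q-p+1 ≤ j` and those
cactus relations involving only such generators. -/
abbrev SliceCactusGroup (n i j : ℕ) := PartialCactusGroup (sliceSet n i j)

/-!
Killing the generators `s_{p,q}` with `q - p + 1 < i` retracts `J_n^{2,j}` onto `J_n^{i,j}`,
so it suffices to embed `J_n^{2,j}` into `J_n`. Its index set is closed under passing to nested
intervals, and we adjoin the remaining intervals one at a time, shortest first. When a
nesting-maximal interval `x` is adjoined to a family `A`, the new relations only say that `s_x` is
an involution acting by conjugation on the subgroup generated by the *core* (the members of `A`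
nested in or disjoint from `x`) through the automorphism induced by reflection in `x`. Hence
`J(A ∪ {x})` maps to the amalgamated product of `J(A)` and the holomorph of `J(core)` over
`J(core)`, compatibly with `J(A)`; since `J(core) → J(A)` is injective by induction on the size of
the family, `J(A)` embeds in the amalgam, hence in `J(A ∪ {x})`.
-/

namespace Cactus

variable {A : Set (ℕ × ℕ)} {a b c x : ℕ × ℕ}

def Nested (c b : ℕ × ℕ) : Prop := b.1 ≤ c.1 ∧ c.2 ≤ b.2

def Apart (c b : ℕ × ℕ) : Prop := c.2 < b.1 ∨ b.2 < c.1

/-- The image of the interval `c ⊆ b` under the reversal `k ↦ b.1 + b.2 - k` of `b`,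
so that (j3) reads `s_b s_c s_b = s_{reflect b c}`. -/
def reflect (b c : ℕ × ℕ) : ℕ × ℕ := (b.1 + b.2 - c.2, b.1 + b.2 - c.1)

instance : Decidable (Nested c b) := inferInstanceAs (Decidable (_ ∧ _))

@[simp]
theorem reflect_self (b : ℕ × ℕ) : reflect b b = b := by
  ext <;> simp [reflect]

theorem reflect_nested (h : Nested c b) : Nested (reflect b c) b := by
  unfold Nested reflect at *; omega

theorem eq_of_reflect_eq_self (hc : c.1 ≤ c.2) (h : Nested c b) (he : reflect b c = b) :
    c = b := by
  obtain ⟨b1, b2⟩ := b; obtain ⟨c1, c2⟩ := c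
  simp only [Nested, reflect, Prod.mk.injEq] at *; omega

theorem length_lt_of_nested (hc : c.1 ≤ c.2) (h : Nested c b) (hne : c ≠ b) :
    c.2 - c.1 < b.2 - b.1 := by
  unfold Nested at h; simp only [Ne, Prod.ext_iff] at hne; omega

def core (A : Set (ℕ × ℕ)) (x : ℕ × ℕ) : Set (ℕ × ℕ) := {b ∈ A | Nested b x ∨ Apart b x}

theorem core_subset (A : Set (ℕ × ℕ)) (x : ℕ × ℕ) : core A x ⊆ A := fun _ hb => hb.1

theorem mem_core_of_nested (hb : b ∈ core A x) (hc : c ∈ A) (hcb : Nested c b) :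
    c ∈ core A x := by
  have hbx := hb.2
  refine ⟨hc, ?_⟩
  unfold Nested Apart at *
  omega

def reflectIn (x b : ℕ × ℕ) : ℕ × ℕ := if Nested b x then reflect x b else b

theorem reflectIn_reflectIn (hb : b.1 ≤ b.2) : reflectIn x (reflectIn x b) = b := by
  obtain ⟨x1, x2⟩ := x; obtain ⟨b1, b2⟩ := b
  unfold reflectIn
  split_ifs <;> simp only [Nested, reflect, Prod.mk.injEq] at * <;> omega

theorem reflectIn_apart (ha : a.1 ≤ a.2) (hb : b.1 ≤ b.2) (hax : Nested a x ∨ Apart a x)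
    (hbx : Nested b x ∨ Apart b x) (hab : Apart a b) :
    Apart (reflectIn x a) (reflectIn x b) := by
  obtain ⟨x1, x2⟩ := x; obtain ⟨a1, a2⟩ := a; obtain ⟨b1, b2⟩ := b
  unfold reflectIn
  split_ifs <;> simp only [Nested, Apart, reflect] at * <;> omega

theorem reflectIn_nested (hb : b.1 ≤ b.2) (hax : Nested a x ∨ Apart a x) (hba : Nested b a) :
    Nested (reflectIn x b) (reflectIn x a) ∧
      reflectIn x (reflect a b) = reflect (reflectIn x a) (reflectIn x b) := by
  obtain ⟨x1, x2⟩ := x; obtain ⟨a1, a2⟩ := a; obtain ⟨b1, b2⟩ := b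
  unfold reflectIn
  split_ifs <;> simp only [Nested, Apart, reflect, Prod.mk.injEq, and_true] at * <;> omega

structure Adjoinable (A : Set (ℕ × ℕ)) (x : ℕ × ℕ) : Prop where
  le : ∀ b ∈ A, b.1 ≤ b.2
  not_mem : x ∉ A
  reflect_mem : ∀ b ∈ A, Nested b x → reflect x b ∈ A
  not_nested : ∀ b ∈ A, ¬ Nested x b

theorem Adjoinable.reflectIn_mem_core (h : Adjoinable A x) (hb : b ∈ core A x) :
    reflectIn x b ∈ core A x := by
  unfold reflectIn
  split_ifs with hbx
  · exact ⟨h.reflect_mem b hb.1 hbx, Or.inl (reflect_nested hbx)⟩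
  · exact hb

structure IsCactusFamily (A : Set (ℕ × ℕ)) : Prop where
  le : ∀ b ∈ A, b.1 ≤ b.2
  reflect_mem : ∀ b ∈ A, ∀ c ∈ A, Nested c b → reflect b c ∈ A

theorem IsCactusFamily.of_insert (hA : IsCactusFamily (insert x A))
    (hmax : ∀ b ∈ A, ¬ Nested x b) : IsCactusFamily A where
  le b hb := hA.le b (.inr hb)
  reflect_mem b hb c hc hcb := (hA.reflect_mem b (.inr hb) c (.inr hc) hcb).resolve_left
    fun hcx => hmax b hb (hcx ▸ reflect_nested hcb)

theorem IsCactusFamily.adjoinable_of_insert (hA : IsCactusFamily (insert x A)) (hx : x ∉ A)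
    (hmax : ∀ b ∈ A, ¬ Nested x b) : Adjoinable A x where
  le b hb := hA.le b (.inr hb)
  not_mem := hx
  reflect_mem b hb hbx := (hA.reflect_mem x (.inl rfl) b (.inr hb) hbx).resolve_left
    fun hcx => hx (eq_of_reflect_eq_self (hA.le b (.inr hb)) hbx hcx ▸ hb)
  not_nested := hmax

end Cactus

open Cactus

abbrev Holomorph (G : Type*) [Group G] := G ⋊[MonoidHom.id (MulAut G)] MulAut G

namespace PartialCactusGroup

variable {C D : Set (ℕ × ℕ)}

theorem mk_eq_one_of_mem {r : FreeGroup C} (h : r ∈ cactusRels C) :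
    PresentedGroup.mk (cactusRels C) r = 1 :=
  (QuotientGroup.eq_one_iff r).2 (Subgroup.subset_normalClosure h)

theorem of_mul_self (a : C) :
    (PresentedGroup.of a : PartialCactusGroup C) * PresentedGroup.of a = 1 :=
  mk_eq_one_of_mem (Or.inl ⟨a, rfl⟩)

theorem commute_of_apart {a b : C} (h : Apart a.1 b.1) :
    Commute (PresentedGroup.of a : PartialCactusGroup C) (PresentedGroup.of b) := by
  have := mk_eq_one_of_mem (Or.inr (Or.inl ⟨a, b, h, rfl⟩))
  simp only [map_mul, map_inv] at this
  exact mul_inv_eq_iff_eq_mul.1 (mul_inv_eq_one.1 this)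

theorem of_mul_of_mul_of_of_nested {a b c : C} (h : Nested b.1 a.1)
    (hc : c.1 = reflect a.1 b.1) :
    (PresentedGroup.of a : PartialCactusGroup C) * PresentedGroup.of b * PresentedGroup.of a =
      PresentedGroup.of c := by
  have := mk_eq_one_of_mem (Or.inr (Or.inr ⟨a, b, c, h.1, h.2, congrArg Prod.fst hc,
    congrArg Prod.snd hc, rfl⟩))
  have h3 : (PresentedGroup.of a : PartialCactusGroup C) * PresentedGroup.of b *
      (PresentedGroup.of a)⁻¹ * (PresentedGroup.of c)⁻¹ = 1 := by
    simp only [map_mul, map_inv] at this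
    exact this
  rw [inv_eq_of_mul_eq_one_right (of_mul_self a)] at h3
  exact mul_inv_eq_one.1 h3

def lift {G : Type*} [Group G] (f : C → G) (h1 : ∀ a, f a * f a = 1)
    (h2 : ∀ a b : C, Apart a.1 b.1 → Commute (f a) (f b))
    (h3 : ∀ a b c : C, Nested b.1 a.1 → c.1 = reflect a.1 b.1 → f a * f b * f a = f c) :
    PartialCactusGroup C →* G :=
  PresentedGroup.toGroup (f := f) <| by
    rintro r (⟨a, rfl⟩ | ⟨a, b, hab, rfl⟩ | ⟨a, b, c, hab₁, hab₂, hc₁, hc₂, rfl⟩) <;>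
      simp only [map_mul, map_inv, FreeGroup.lift_apply_of]
    · exact h1 a
    · rw [(h2 a b hab).eq, mul_inv_cancel_right, mul_inv_cancel]
    · rw [inv_eq_of_mul_eq_one_right (h1 a), h3 a b c ⟨hab₁, hab₂⟩ (Prod.ext hc₁ hc₂),
        mul_inv_cancel]

@[simp]
theorem lift_of {G : Type*} [Group G] (f : C → G) (h1 h2 h3) (a : C) :
    lift f h1 h2 h3 (PresentedGroup.of a) = f a :=
  PresentedGroup.toGroup.of _

def inclusion (h : C ⊆ D) : PartialCactusGroup C →* PartialCactusGroup D :=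
  lift (fun a => PresentedGroup.of ⟨a, h a.2⟩) (fun _ => of_mul_self _)
    (fun _ _ hab => commute_of_apart hab) (fun _ _ _ hab hc => of_mul_of_mul_of_of_nested hab hc)

@[simp]
theorem inclusion_of (h : C ⊆ D) (a : C) :
    inclusion h (PresentedGroup.of a) = PresentedGroup.of ⟨a, h a.2⟩ :=
  lift_of _ _ _ _ a

theorem inclusion_eq_id (h : C ⊆ C) : inclusion h = MonoidHom.id _ :=
  PresentedGroup.ext fun _ => inclusion_of h _

theorem inclusion_comp_inclusion {E : Set (ℕ × ℕ)} (hCD : C ⊆ D) (hDE : D ⊆ E) :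
    (inclusion hDE).comp (inclusion hCD) = inclusion (hCD.trans hDE) :=
  PresentedGroup.ext fun _ => by simp

open Classical in
noncomputable def retractGen (D : Set (ℕ × ℕ)) (b : ℕ × ℕ) : PartialCactusGroup D :=
  if hb : b ∈ D then .of ⟨b, hb⟩ else 1

theorem retractGen_of_mem {b : ℕ × ℕ} (hb : b ∈ D) : retractGen D b = .of ⟨b, hb⟩ := dif_pos hb

theorem retractGen_of_not_mem {b : ℕ × ℕ} (hb : b ∉ D) : retractGen D b = 1 := dif_neg hb

theorem retractGen_mul_self (b : ℕ × ℕ) : retractGen D b * retractGen D b = 1 := by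
  by_cases hb : b ∈ D
  · rw [retractGen_of_mem hb, of_mul_self]
  · rw [retractGen_of_not_mem hb, mul_one]

theorem commute_retractGen {a b : ℕ × ℕ} (hab : Apart a b) :
    Commute (retractGen D a) (retractGen D b) := by
  by_cases ha : a ∈ D
  · by_cases hb : b ∈ D
    · rw [retractGen_of_mem ha, retractGen_of_mem hb]
      exact commute_of_apart (a := ⟨a, ha⟩) (b := ⟨b, hb⟩) hab
    · rw [retractGen_of_not_mem hb]; exact Commute.one_right _
  · rw [retractGen_of_not_mem ha]; exact Commute.one_left _

/-- A cactus relation with a short generator `s_b` has its other generators either short as well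
or of the form `s_a s_b s_a = s_c` with `s_a² = 1`, so killing short generators respects it. -/
theorem retractGen_mul_retractGen_mul_retractGen {ℓ : ℕ} (hD : ∀ b ∈ C, b ∈ D ↔ ℓ ≤ b.2 - b.1)
    {a b : ℕ × ℕ} (ha : a ∈ C) (hb : b ∈ C) (hc : reflect a b ∈ C) (hba : Nested b a) :
    retractGen D a * retractGen D b * retractGen D a = retractGen D (reflect a b) := by
  have hlen : (reflect a b).2 - (reflect a b).1 = b.2 - b.1 ∧ b.2 - b.1 ≤ a.2 - a.1 := by
    unfold reflect; unfold Nested at hba; omega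
  by_cases hbD : b ∈ D
  · have haD : a ∈ D := (hD a ha).2 (((hD b hb).1 hbD).trans hlen.2)
    have hcD : reflect a b ∈ D := (hD _ hc).2 (hlen.1 ▸ (hD b hb).1 hbD)
    rw [retractGen_of_mem haD, retractGen_of_mem hbD, retractGen_of_mem hcD]
    exact of_mul_of_mul_of_of_nested (a := ⟨a, haD⟩) (b := ⟨b, hbD⟩) (c := ⟨_, hcD⟩) hba rfl
  · have hcD : reflect a b ∉ D := fun hcD => hbD ((hD b hb).2 (hlen.1 ▸ (hD _ hc).1 hcD))
    rw [retractGen_of_not_mem hbD, retractGen_of_not_mem hcD, mul_one, retractGen_mul_self]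

noncomputable def lengthRetraction {ℓ : ℕ} (hD : ∀ b ∈ C, b ∈ D ↔ ℓ ≤ b.2 - b.1) :
    PartialCactusGroup C →* PartialCactusGroup D :=
  lift (fun b => retractGen D b) (fun b => retractGen_mul_self b)
    (fun _ _ hab => commute_retractGen hab)
    (fun a b c hba hc => by
      rw [hc]; exact retractGen_mul_retractGen_mul_retractGen hD a.2 b.2 (hc ▸ c.2) hba)

theorem lengthRetraction_comp_inclusion (h : D ⊆ C) {ℓ : ℕ}
    (hD : ∀ b ∈ C, b ∈ D ↔ ℓ ≤ b.2 - b.1) :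
    (lengthRetraction hD).comp (inclusion h) = MonoidHom.id _ :=
  PresentedGroup.ext fun b => by
    simp only [lengthRetraction, MonoidHom.comp_apply, inclusion_of, lift_of, MonoidHom.id_apply]
    exact retractGen_of_mem b.2

theorem inclusion_injective_of_length (h : D ⊆ C) {ℓ : ℕ}
    (hD : ∀ b ∈ C, b ∈ D ↔ ℓ ≤ b.2 - b.1) :
    Function.Injective (inclusion h) :=
  Function.LeftInverse.injective (g := lengthRetraction hD)
    (DFunLike.congr_fun (lengthRetraction_comp_inclusion h hD))

section Adjoin

variable {A : Set (ℕ × ℕ)} {x : ℕ × ℕ}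

/-- Conjugation by `s_x`, as an endomorphism of the group generated by the core. -/
def coreReflection (h : Adjoinable A x) :
    PartialCactusGroup (core A x) →* PartialCactusGroup (core A x) :=
  lift (fun b => .of ⟨reflectIn x b, h.reflectIn_mem_core b.2⟩) (fun _ => of_mul_self _)
    (fun a b hab =>
      commute_of_apart <| reflectIn_apart (h.le a a.2.1) (h.le b b.2.1) a.2.2 b.2.2 hab)
    (fun a b c hba hc => by
      obtain ⟨hnested, hreflect⟩ := reflectIn_nested (h.le b b.2.1) a.2.2 hba
      exact of_mul_of_mul_of_of_nested hnested (by rw [← hreflect, ← hc]))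

theorem coreReflection_comp_self (h : Adjoinable A x) :
    (coreReflection h).comp (coreReflection h) = MonoidHom.id _ :=
  PresentedGroup.ext fun b => by
    simp only [coreReflection, MonoidHom.comp_apply, lift_of, MonoidHom.id_apply]
    exact congrArg PresentedGroup.of (Subtype.ext (reflectIn_reflectIn (h.le b b.2.1)))

def coreReflectionAut (h : Adjoinable A x) : MulAut (PartialCactusGroup (core A x)) :=
  (coreReflection h).toMulEquiv (coreReflection h) (coreReflection_comp_self h)
    (coreReflection_comp_self h)

theorem coreReflectionAut_mul_self (h : Adjoinable A x) :
    coreReflectionAut h * coreReflectionAut h = 1 :=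
  MulEquiv.ext fun g => DFunLike.congr_fun (coreReflection_comp_self h) g

variable (A x) in
def amalgamFactor : Bool → Type :=
  fun i => cond i (Holomorph (PartialCactusGroup (core A x))) (PartialCactusGroup A)

instance : ∀ i, Group (amalgamFactor A x i)
  | true => inferInstanceAs (Group (Holomorph _))
  | false => inferInstanceAs (Group (PartialCactusGroup A))

variable (A x) in
def amalgamLeg : ∀ i, PartialCactusGroup (core A x) →* amalgamFactor A x i
  | false => inclusion (core_subset A x)
  | true => SemidirectProduct.inl

variable (A x) in
/-- `J(A) *_{J(core A x)} Hol(J(core A x))`. -/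
abbrev Amalgam := Monoid.PushoutI (amalgamLeg A x)

namespace Amalgam

variable (A x) in
def ofA : PartialCactusGroup A →* Amalgam A x := Monoid.PushoutI.of (φ := amalgamLeg A x) false

variable (A x) in
def ofHol : Holomorph (PartialCactusGroup (core A x)) →* Amalgam A x :=
  Monoid.PushoutI.of (φ := amalgamLeg A x) true

def reflection (h : Adjoinable A x) : Amalgam A x :=
  ofHol A x (SemidirectProduct.inr (coreReflectionAut h))

theorem ofA_injective (hcore : Function.Injective (inclusion (core_subset A x))) :
    Function.Injective (ofA A x) := by
  refine Monoid.PushoutI.of_injective (φ := amalgamLeg A x) (fun i => ?_) false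
  cases i
  · exact hcore
  · exact SemidirectProduct.inl_injective

theorem ofA_inclusion (g : PartialCactusGroup (core A x)) :
    ofA A x (inclusion (core_subset A x) g) = ofHol A x (SemidirectProduct.inl g) :=
  (DFunLike.congr_fun (Monoid.PushoutI.of_comp_eq_base false) g).trans
    (DFunLike.congr_fun (Monoid.PushoutI.of_comp_eq_base true) g).symm

theorem reflection_mul_self (h : Adjoinable A x) : reflection h * reflection h = 1 := by
  rw [reflection, ← map_mul, ← map_mul, coreReflectionAut_mul_self, map_one, map_one]

theorem reflection_mul_ofA_mul_reflection (h : Adjoinable A x)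
    (g : PartialCactusGroup (core A x)) :
    reflection h * ofA A x (inclusion (core_subset A x) g) * reflection h =
      ofA A x (inclusion (core_subset A x) (coreReflection h g)) := by
  nth_rw 2 [← inv_eq_of_mul_eq_one_right (reflection_mul_self h)]
  rw [ofA_inclusion, ofA_inclusion, reflection, ← map_inv, ← map_mul, ← map_mul, ← map_inv,
    ← SemidirectProduct.inl_aut]
  rfl

open Classical in
noncomputable def adjoinGen (h : Adjoinable A x) (b : ℕ × ℕ) : Amalgam A x :=
  if b = x then reflection h else if hb : b ∈ A then ofA A x (.of ⟨b, hb⟩) else 1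

theorem adjoinGen_self (h : Adjoinable A x) : adjoinGen h x = reflection h := if_pos rfl

theorem adjoinGen_of_mem (h : Adjoinable A x) {b : ℕ × ℕ} (hb : b ∈ A) :
    adjoinGen h b = ofA A x (.of ⟨b, hb⟩) := by
  rw [adjoinGen, if_neg (fun hbx : b = x => h.not_mem (hbx ▸ hb)), dif_pos hb]

theorem reflection_mul_adjoinGen_mul_reflection (h : Adjoinable A x) {b : ℕ × ℕ}
    (hb : b ∈ core A x) :
    reflection h * adjoinGen h b * reflection h = adjoinGen h (reflectIn x b) := by
  have := reflection_mul_ofA_mul_reflection h (.of ⟨b, hb⟩)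
  rwa [inclusion_of, coreReflection, lift_of, inclusion_of, ← adjoinGen_of_mem,
    ← adjoinGen_of_mem] at this

theorem adjoinGen_mul_self (h : Adjoinable A x) {b : ℕ × ℕ} (hb : b ∈ insert x A) :
    adjoinGen h b * adjoinGen h b = 1 := by
  obtain rfl | hb := hb
  · rw [adjoinGen_self, reflection_mul_self]
  · rw [adjoinGen_of_mem h hb, ← map_mul, of_mul_self, map_one]

theorem commute_reflection_adjoinGen (h : Adjoinable A x) {b : ℕ × ℕ} (hb : b ∈ A)
    (hbx : Apart b x) : Commute (reflection h) (adjoinGen h b) := by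
  have hfix : reflectIn x b = b := if_neg fun hn => by
    have := h.le b hb; unfold Nested Apart at *; omega
  have := reflection_mul_adjoinGen_mul_reflection h ⟨hb, Or.inr hbx⟩
  rw [hfix, ← inv_eq_of_mul_eq_one_right (reflection_mul_self h)] at this
  exact mul_inv_eq_iff_eq_mul.1 this

theorem commute_adjoinGen (h : Adjoinable A x) {a b : ℕ × ℕ} (ha : a ∈ insert x A)
    (hb : b ∈ insert x A) (hab : Apart a b) : Commute (adjoinGen h a) (adjoinGen h b) := by
  obtain rfl | ha := ha <;> obtain rfl | hb := hb
  · exact Commute.refl _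
  · rw [adjoinGen_self]
    exact commute_reflection_adjoinGen h hb (by unfold Apart at *; omega)
  · rw [adjoinGen_self]
    exact (commute_reflection_adjoinGen h ha hab).symm
  · rw [adjoinGen_of_mem h ha, adjoinGen_of_mem h hb]
    exact (commute_of_apart (a := ⟨a, ha⟩) (b := ⟨b, hb⟩) hab).map _

theorem adjoinGen_mul_adjoinGen_mul_adjoinGen (h : Adjoinable A x) {a b : ℕ × ℕ}
    (ha : a ∈ insert x A) (hb : b ∈ insert x A) (hc : reflect a b ∈ insert x A)
    (hba : Nested b a) :
    adjoinGen h a * adjoinGen h b * adjoinGen h a = adjoinGen h (reflect a b) := by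
  obtain rfl | ha := ha
  · obtain rfl | hb := hb
    · rw [reflect_self, adjoinGen_self, reflection_mul_self, one_mul]
    · have := reflection_mul_adjoinGen_mul_reflection h ⟨hb, Or.inl hba⟩
      rwa [reflectIn, if_pos hba, ← adjoinGen_self] at this
  · have hbA : b ∈ A := hb.resolve_left fun hbx => h.not_nested a ha (hbx ▸ hba)
    have hcA : reflect a b ∈ A :=
      hc.resolve_left fun hcx => h.not_nested a ha (hcx ▸ reflect_nested hba)
    rw [adjoinGen_of_mem h ha, adjoinGen_of_mem h hbA, adjoinGen_of_mem h hcA, ← map_mul,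
      ← map_mul, of_mul_of_mul_of_of_nested (a := ⟨a, ha⟩) (b := ⟨b, hbA⟩) (c := ⟨_, hcA⟩) hba rfl]

end Amalgam

open Amalgam in
noncomputable def toAmalgam (h : Adjoinable A x) :
    PartialCactusGroup (insert x A) →* Amalgam A x :=
  lift (fun b => adjoinGen h b) (fun b => adjoinGen_mul_self h b.2)
    (fun a b hab => commute_adjoinGen h a.2 b.2 hab)
    (fun a b c hba hc => by
      rw [hc]; exact adjoinGen_mul_adjoinGen_mul_adjoinGen h a.2 b.2 (hc ▸ c.2) hba)

theorem toAmalgam_comp_inclusion (h : Adjoinable A x) :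
    (toAmalgam h).comp (inclusion (Set.subset_insert x A)) = Amalgam.ofA A x :=
  PresentedGroup.ext fun b => by
    simp only [toAmalgam, MonoidHom.comp_apply, inclusion_of, lift_of]
    exact Amalgam.adjoinGen_of_mem h b.2

theorem inclusion_insert_injective (h : Adjoinable A x)
    (hcore : Function.Injective (inclusion (core_subset A x))) :
    Function.Injective (inclusion (Set.subset_insert x A)) := by
  have := Amalgam.ofA_injective hcore
  rw [← toAmalgam_comp_inclusion h, MonoidHom.coe_comp] at this
  exact this.of_comp

end Adjoin

theorem inclusion_injective_of_nested_closed {T₀ T : Set (ℕ × ℕ)} (hT : IsCactusFamily T)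
    (hfin : T.Finite) (hT₀ : T₀ ⊆ T) (hdown : ∀ b ∈ T₀, ∀ c ∈ T, Nested c b → c ∈ T₀) :
    Function.Injective (inclusion hT₀) := by
  induction hn : T.ncard using Nat.strong_induction_on generalizing T₀ T with
  | _ n ih =>
  by_cases hsub : T ⊆ T₀
  · obtain rfl := hT₀.antisymm hsub
    rw [inclusion_eq_id]
    exact Function.injective_id
  obtain ⟨a, ⟨haT, ha₀⟩, hamax⟩ := hfin.sdiff.exists_maximalFor (fun z => z.2 - z.1) (T \ T₀)
    (Set.sdiff_nonempty.2 hsub)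
  have hmax : ∀ b ∈ T, b ≠ a → ¬ Nested a b := fun b hb hba hab => by
    by_cases hb₀ : b ∈ T₀
    · exact ha₀ (hdown b hb₀ a haT hab)
    · have hlt := length_lt_of_nested (hT.le a haT) hab hba.symm
      exact hlt.not_ge (hamax ⟨hb, hb₀⟩ hlt.le)
  obtain ⟨T, haT', rfl⟩ : ∃ T', a ∉ T' ∧ insert a T' = T :=
    ⟨T \ {a}, by simp, by simp [haT]⟩
  have hmax' : ∀ b ∈ T, ¬ Nested a b :=
    fun b hb => hmax b (.inr hb) (ne_of_mem_of_not_mem hb haT')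
  have hcard : T.ncard < n := hn ▸ Set.ncard_lt_ncard (Set.ssubset_insert haT') hfin
  have hT' := hT.of_insert hmax'
  have hT₀' : T₀ ⊆ T := fun b hb => (hT₀ hb).resolve_left fun hba => ha₀ (hba ▸ hb)
  have h₁ := ih _ hcard hT' (hfin.subset (Set.subset_insert a T)) hT₀'
    (fun b hb c hc => hdown b hb c (.inr hc)) rfl
  have h₂ := inclusion_insert_injective (hT.adjoinable_of_insert haT' hmax')
    (ih _ hcard hT' (hfin.subset (Set.subset_insert a T)) (core_subset T a)
      (fun b hb c hc => mem_core_of_nested hb hc) rfl)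
  rw [← inclusion_comp_inclusion hT₀' (Set.subset_insert a T), MonoidHom.coe_comp]
  exact h₂.comp h₁

end PartialCactusGroup

theorem sliceSet_subset_cactusSet (n i j : ℕ) : sliceSet n i j ⊆ cactusSet n := fun _ hb => hb.1

theorem sliceSet_subset_sliceSet_two (n i j : ℕ) : sliceSet n i j ⊆ sliceSet n 2 j := by
  intro b hb
  simp only [sliceSet, cactusSet, Set.mem_ofPred_eq] at *
  omega

theorem mem_sliceSet_iff_of_mem_sliceSet_two {n i j : ℕ} {b : ℕ × ℕ} (hb : b ∈ sliceSet n 2 j) :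
    b ∈ sliceSet n i j ↔ i - 1 ≤ b.2 - b.1 := by
  simp only [sliceSet, cactusSet, Set.mem_ofPred_eq] at *
  omega

theorem cactusSet_finite (n : ℕ) : (cactusSet n).Finite :=
  (Set.finite_Icc (0, 0) (n, n)).subset fun b hb => by
    simp only [cactusSet, Set.mem_ofPred_eq, Set.mem_Icc, Prod.le_def] at *
    omega

theorem isCactusFamily_cactusSet (n : ℕ) : IsCactusFamily (cactusSet n) where
  le _ hb := hb.2.1.le
  reflect_mem b hb c hc hcb := by
    simp only [cactusSet, Nested, reflect, Set.mem_ofPred_eq] at *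
    omega

theorem mem_sliceSet_two_of_nested {n j : ℕ} {b c : ℕ × ℕ} (hb : b ∈ sliceSet n 2 j)
    (hc : c ∈ cactusSet n) (hcb : Nested c b) : c ∈ sliceSet n 2 j := by
  simp only [sliceSet, cactusSet, Nested, Set.mem_ofPred_eq] at *
  omega

theorem slice_embeds_in_cactus_general (n i j : ℕ) :
    ∃ φ : SliceCactusGroup n i j →* CactusGroup n,
      (∀ (pq : ℕ × ℕ) (h : pq ∈ sliceSet n i j),
        φ (PresentedGroup.of ⟨pq, h⟩) = PresentedGroup.of ⟨pq, h.1⟩) ∧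
      Function.Injective φ := by
  refine ⟨PartialCactusGroup.inclusion (sliceSet_subset_cactusSet n i j),
    fun pq h => PartialCactusGroup.inclusion_of _ _, ?_⟩
  rw [← PartialCactusGroup.inclusion_comp_inclusion (sliceSet_subset_sliceSet_two n i j)
    (sliceSet_subset_cactusSet n 2 j), MonoidHom.coe_comp]
  have upper := PartialCactusGroup.inclusion_injective_of_nested_closed
    (isCactusFamily_cactusSet n) (cactusSet_finite n) (sliceSet_subset_cactusSet n 2 j)
    fun _ hb _ hc => mem_sliceSet_two_of_nested hb hc
  have lower := PartialCactusGroup.inclusion_injective_of_length (ℓ := i - 1)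
    (sliceSet_subset_sliceSet_two n i j) fun _ => mem_sliceSet_iff_of_mem_sliceSet_two
  exact upper.comp lower

/-- For all `2 ≤ i ≤ j ≤ n`, the homomorphism `J_n^{i,j} → J_n`,
`s_{p,q} ↦ s_{p,q}`, is injective. -/
theorem slice_embeds_in_cactus (n i j : ℕ) (h2 : 2 ≤ i) (hij : i ≤ j) (hjn : j ≤ n) :
    ∃ φ : SliceCactusGroup n i j →* CactusGroup n,
      (∀ (pq : ℕ × ℕ) (h : pq ∈ sliceSet n i j),
        φ (PresentedGroup.of ⟨pq, h⟩) = PresentedGroup.of ⟨pq, h.1⟩) ∧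
      Function.Injective φ :=
  slice_embeds_in_cactus_general n i j
end

section
/- The cactus group J_3 is isomorphic to the free product (ℤ/2ℤ) * (ℤ/2ℤ): the homomorphism from the group presented as ⟨a, b | a² = b² = 1⟩ to J_3 sending a ↦ s_{1,2} and b ↦ s_{1,3} is a group isomorphism. -/
/-- The generator `s_{1,2}` of `J_3`. -/
def s12 : CactusGroup 3 := PresentedGroup.of ⟨(1, 2), ⟨by omega, by omega, by omega⟩⟩

/-- The generator `s_{1,3}` of `J_3`. -/
def s13 : CactusGroup 3 := PresentedGroup.of ⟨(1, 3), ⟨by omega, by omega, by omega⟩⟩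

/-- The relations of the free product `ℤ/2 * ℤ/2 = ⟨a, b | a² = b² = 1⟩`. -/
def fc2Rels : Set (FreeGroup Bool) := {w | ∃ x : Bool, w = FreeGroup.of x * FreeGroup.of x}

section Aux

private lemma rel_one' {α : Type*} {rels : Set (FreeGroup α)} {w : FreeGroup α} (h : w ∈ rels) :
    PresentedGroup.mk rels w = 1 :=
  (QuotientGroup.eq_one_iff _).2 (Subgroup.subset_normalClosure h)

private lemma mem3 (x : ↥(cactusSet 3)) : x.1 = (1,2) ∨ x.1 = (1,3) ∨ x.1 = (2,3) := by
  obtain ⟨⟨p, q⟩, h1, h2, h3⟩ := x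
  simp only [Prod.mk.injEq]
  omega

private lemma cact_sq (x : ↥(cactusSet 3)) :
    (PresentedGroup.of (rels := cactusRels (cactusSet 3)) x) * PresentedGroup.of x = 1 := by
  have := rel_one' (show FreeGroup.of x * FreeGroup.of x ∈ cactusRels (cactusSet 3)
    from Or.inl ⟨x, rfl⟩)
  simpa [PresentedGroup.of, map_mul] using this

/-- the third generator -/
private def s23 : CactusGroup 3 := PresentedGroup.of ⟨(2, 3), ⟨by omega, by omega, by omega⟩⟩

private lemma cact_j3 : s13 * s12 * s13⁻¹ * s23⁻¹ = 1 := by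
  have := rel_one' (show
      FreeGroup.of (⟨(1,3), ⟨by omega, by omega, by omega⟩⟩ : ↥(cactusSet 3)) *
      FreeGroup.of (⟨(1,2), ⟨by omega, by omega, by omega⟩⟩ : ↥(cactusSet 3)) *
      (FreeGroup.of (⟨(1,3), ⟨by omega, by omega, by omega⟩⟩ : ↥(cactusSet 3)))⁻¹ *
      (FreeGroup.of (⟨(2,3), ⟨by omega, by omega, by omega⟩⟩ : ↥(cactusSet 3)))⁻¹
      ∈ cactusRels (cactusSet 3) from Or.inr (Or.inr
        ⟨_, _, _, by norm_num, by norm_num, by norm_num, by norm_num, rfl⟩))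
  simpa [s12, s13, s23, PresentedGroup.of, map_mul, map_inv] using this

private lemma s13_inv : s13⁻¹ = s13 := inv_eq_of_mul_eq_one_right (cact_sq _)

private lemma s23_eq : s13 * s12 * s13 = s23 := by
  have h := cact_j3
  rw [s13_inv] at h
  have := mul_eq_one_iff_eq_inv.mp h
  rw [this, inv_inv]

private def ga : PresentedGroup fc2Rels := PresentedGroup.of false
private def gb : PresentedGroup fc2Rels := PresentedGroup.of true

private lemma fc2_sq (x : Bool) :
    (PresentedGroup.of (rels := fc2Rels) x) * PresentedGroup.of x = 1 := by
  have := rel_one' (show FreeGroup.of x * FreeGroup.of x ∈ fc2Rels from ⟨x, rfl⟩)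
  simpa [PresentedGroup.of, map_mul] using this

private lemma ga_sq : ga * ga = 1 := fc2_sq false
private lemma gb_sq : gb * gb = 1 := fc2_sq true
private lemma ga_inv : ga⁻¹ = ga := inv_eq_of_mul_eq_one_right ga_sq
private lemma gb_inv : gb⁻¹ = gb := inv_eq_of_mul_eq_one_right gb_sq
private lemma ga_cancel (x : PresentedGroup fc2Rels) : ga * (ga * x) = x := by
  rw [← mul_assoc, ga_sq, one_mul]
private lemma gb_cancel (x : PresentedGroup fc2Rels) : gb * (gb * x) = x := by
  rw [← mul_assoc, gb_sq, one_mul]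

private def gmap (x : ↥(cactusSet 3)) : PresentedGroup fc2Rels :=
  if x.1.2 = 2 then ga else if x.1.1 = 1 then gb else gb * ga * gb

private lemma gmap12 (x : ↥(cactusSet 3)) (h : x.1 = (1,2)) : gmap x = ga := by
  simp [gmap, h]
private lemma gmap13 (x : ↥(cactusSet 3)) (h : x.1 = (1,3)) : gmap x = gb := by
  simp [gmap, h]
private lemma gmap23 (x : ↥(cactusSet 3)) (h : x.1 = (2,3)) : gmap x = gb * ga * gb := by
  simp [gmap, h]

set_option maxHeartbeats 1600000 in
private lemma gmap_rels : ∀ r ∈ cactusRels (cactusSet 3), FreeGroup.lift gmap r = 1 := by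
  rintro r (⟨a, rfl⟩ | ⟨a, b, hab, rfl⟩ | ⟨a, b, c, h1, h2, h3, h4, rfl⟩)
  · rcases mem3 a with h | h | h
    · simp [gmap12 a h, ga_sq]
    · simp [gmap13 a h, gb_sq]
    · simp only [map_mul, FreeGroup.lift_apply_of, gmap23 a h]
      simp [mul_assoc, ga_cancel, gb_cancel, ga_sq, gb_sq]
  · -- disjoint intervals: impossible in cactusSet 3
    exfalso
    have ha := a.2
    have hb := b.2
    obtain ⟨ha1, ha2, ha3⟩ := ha
    obtain ⟨hb1, hb2, hb3⟩ := hb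
    omega
  · -- j3 relations
    obtain ⟨⟨ap, aq⟩, ha⟩ := a
    obtain ⟨⟨bp, bq⟩, hb⟩ := b
    obtain ⟨⟨cp, cq⟩, hc⟩ := c
    obtain ⟨ha1, ha2, ha3⟩ := id ha
    obtain ⟨hb1, hb2, hb3⟩ := id hb
    obtain ⟨hc1, hc2, hc3⟩ := id hc
    dsimp only at h1 h2 h3 h4 ha1 ha2 ha3 hb1 hb2 hb3 hc1 hc2 hc3
    simp only [map_mul, map_inv, FreeGroup.lift_apply_of]
    have key : (ap = 1 ∧ aq = 2 ∧ bp = 1 ∧ bq = 2 ∧ cp = 1 ∧ cq = 2) ∨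
        (ap = 2 ∧ aq = 3 ∧ bp = 2 ∧ bq = 3 ∧ cp = 2 ∧ cq = 3) ∨
        (ap = 1 ∧ aq = 3 ∧ bp = 1 ∧ bq = 3 ∧ cp = 1 ∧ cq = 3) ∨
        (ap = 1 ∧ aq = 3 ∧ bp = 1 ∧ bq = 2 ∧ cp = 2 ∧ cq = 3) ∨
        (ap = 1 ∧ aq = 3 ∧ bp = 2 ∧ bq = 3 ∧ cp = 1 ∧ cq = 2) := by omega
    rcases key with ⟨e1, e2, e3, e4, e5, e6⟩ | ⟨e1, e2, e3, e4, e5, e6⟩ |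
      ⟨e1, e2, e3, e4, e5, e6⟩ | ⟨e1, e2, e3, e4, e5, e6⟩ | ⟨e1, e2, e3, e4, e5, e6⟩
    · rw [gmap12 ⟨(ap, aq), ha⟩ (by simp [e1, e2]), gmap12 ⟨(bp, bq), hb⟩ (by simp [e3, e4]),
        gmap12 ⟨(cp, cq), hc⟩ (by simp [e5, e6])]
      group
    · rw [gmap23 ⟨(ap, aq), ha⟩ (by simp [e1, e2]), gmap23 ⟨(bp, bq), hb⟩ (by simp [e3, e4]),
        gmap23 ⟨(cp, cq), hc⟩ (by simp [e5, e6])]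
      group
    · rw [gmap13 ⟨(ap, aq), ha⟩ (by simp [e1, e2]), gmap13 ⟨(bp, bq), hb⟩ (by simp [e3, e4]),
        gmap13 ⟨(cp, cq), hc⟩ (by simp [e5, e6])]
      group
    · rw [gmap13 ⟨(ap, aq), ha⟩ (by simp [e1, e2]), gmap12 ⟨(bp, bq), hb⟩ (by simp [e3, e4]),
        gmap23 ⟨(cp, cq), hc⟩ (by simp [e5, e6]), gb_inv]
      simp [mul_inv_rev, ga_inv, gb_inv, mul_assoc, ga_cancel, gb_cancel, ga_sq, gb_sq]
    · rw [gmap13 ⟨(ap, aq), ha⟩ (by simp [e1, e2]), gmap23 ⟨(bp, bq), hb⟩ (by simp [e3, e4]),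
        gmap12 ⟨(cp, cq), hc⟩ (by simp [e5, e6]), gb_inv, ga_inv]
      simp [mul_assoc, ga_cancel, gb_cancel, ga_sq, gb_sq]

private def fmap (x : Bool) : CactusGroup 3 := bif x then s13 else s12

private lemma fmap_rels : ∀ r ∈ fc2Rels, FreeGroup.lift fmap r = 1 := by
  rintro r ⟨x, rfl⟩
  cases x <;> simp [fmap] <;> [exact cact_sq _; exact cact_sq _]

private def φ0 : PresentedGroup fc2Rels →* CactusGroup 3 := PresentedGroup.toGroup fmap_rels
private def ψ0 : CactusGroup 3 →* PresentedGroup fc2Rels := PresentedGroup.toGroup gmap_rels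

private lemma φ0_false : φ0 (PresentedGroup.of false) = s12 := by simp [φ0, fmap]
private lemma φ0_true : φ0 (PresentedGroup.of true) = s13 := by simp [φ0, fmap]
private lemma φ0_ga : φ0 ga = s12 := φ0_false
private lemma φ0_gb : φ0 gb = s13 := φ0_true

private lemma ψ0_of (x : ↥(cactusSet 3)) : ψ0 (PresentedGroup.of x) = gmap x :=
  PresentedGroup.toGroup.of gmap_rels

private lemma ψ0_s12 : ψ0 s12 = ga := by
  unfold s12; rw [ψ0_of]; exact gmap12 _ rfl

private lemma ψ0_s13 : ψ0 s13 = gb := by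
  unfold s13; rw [ψ0_of]; exact gmap13 _ rfl

private lemma left_inv : ψ0.comp φ0 = MonoidHom.id _ := by
  ext x
  cases x
  · simp only [MonoidHom.comp_apply, MonoidHom.id_apply, φ0_false, ψ0_s12]; rfl
  · simp only [MonoidHom.comp_apply, MonoidHom.id_apply, φ0_true, ψ0_s13]; rfl

private lemma right_inv : φ0.comp ψ0 = MonoidHom.id _ := by
  ext x
  simp only [MonoidHom.comp_apply, MonoidHom.id_apply, ψ0_of]
  rcases mem3 x with h | h | h
  · rw [gmap12 x h, φ0_ga, s12]
    exact congrArg _ (Subtype.ext h.symm)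
  · rw [gmap13 x h, φ0_gb, s13]
    exact congrArg _ (Subtype.ext h.symm)
  · rw [gmap23 x h, map_mul, map_mul, φ0_ga, φ0_gb, s23_eq, s23]
    exact congrArg _ (Subtype.ext h.symm)

end Aux

/-- `J_3 ≅ (ℤ/2ℤ) * (ℤ/2ℤ)`: the homomorphism
`⟨a, b | a² = b² = 1⟩ → J_3`, `a ↦ s_{1,2}`, `b ↦ s_{1,3}`, is an isomorphism. -/
theorem j3_iso_free_product :
    ∃ φ : PresentedGroup fc2Rels →* CactusGroup 3,
      φ (PresentedGroup.of false) = s12 ∧ φ (PresentedGroup.of true) = s13 ∧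
      Function.Bijective φ := by
  refine ⟨φ0, φ0_false, φ0_true, ?_, ?_⟩
  · intro x y hxy
    have hx := DFunLike.congr_fun left_inv x
    have hy := DFunLike.congr_fun left_inv y
    simp only [MonoidHom.comp_apply, MonoidHom.id_apply] at hx hy
    rw [← hx, ← hy, hxy]
  · intro y
    refine ⟨ψ0 y, ?_⟩
    have := DFunLike.congr_fun right_inv y
    simpa using this
end
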